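/- IPCW unbiasedness: if T and C are conditionally independent given X, and G(t|x) = P(C > t | X = x) > δ > 0 for t ≤ τ, then for any bounded measurable h and t ≤ τ, E[ 1{T̃ > t} · h(X) / G(t|X) ] = E[ h(X) · P(T > t | X) ], where T̃ = min(T, C). -/
import Mathlib


open MeasureTheory ProbabilityTheory

theorem stmt15 {Ω 𝓧 : Type*} [MeasurableSpace Ω] [StandardBorelSpace Ω] [Nonempty Ω]
    [MeasurableSpace 𝓧]
    (μ : Measure Ω) [IsProbabilityMeasure μ]
    (X : Ω → 𝓧) (T C : Ω → ℝ)
    (hX : Measurable X) (hT : Measurable T) (hC : Measurable C)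
    (hTnn : ∀ ω, 0 ≤ T ω) (hCnn : ∀ ω, 0 ≤ C ω)
    (hci : CondIndepFun (MeasurableSpace.comap X inferInstance)
      (measurable_iff_comap_le.mp hX) T C μ)
    (τ δ : ℝ) (hδ : 0 < δ)
    (G ST : ℝ → 𝓧 → ℝ)
    (hG : ∀ t : ℝ, μ[(Set.indicator {ω | t < C ω} fun _ => (1 : ℝ)) |
        MeasurableSpace.comap X inferInstance] =ᵐ[μ] fun ω => G t (X ω))
    (hST : ∀ t : ℝ, μ[(Set.indicator {ω | t < T ω} fun _ => (1 : ℝ)) |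
        MeasurableSpace.comap X inferInstance] =ᵐ[μ] fun ω => ST t (X ω))
    (hGpos : ∀ t ≤ τ, ∀ x, δ < G t x)
    (h : 𝓧 → ℝ) (hh : Measurable h) (Cb : ℝ) (hhb : ∀ x, |h x| ≤ Cb)
    (t : ℝ) (ht : t ≤ τ) :
    ∫ ω, (if t < min (T ω) (C ω) then h (X ω) / G t (X ω) else 0) ∂μ
      = ∫ ω, h (X ω) * ST t (X ω) ∂μ := by
  have hm := measurable_iff_comap_le.mp hX
  haveI : SigmaFinite (μ.trim hm) := by
    have : IsFiniteMeasure (μ.trim hm) := isFiniteMeasure_trim hm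
    infer_instance
  set A : Set Ω := {ω | t < T ω} with hA_def
  set B : Set Ω := {ω | t < C ω} with hB_def
  have hAmeas : MeasurableSet A := measurableSet_lt measurable_const hT
  have hBmeas : MeasurableSet B := measurableSet_lt measurable_const hC
  -- conditional independence gives product formula
  have key : (μ⟦A ∩ B | MeasurableSpace.comap X inferInstance⟧) =ᵐ[μ] (μ⟦A | MeasurableSpace.comap X inferInstance⟧) * (μ⟦B | MeasurableSpace.comap X inferInstance⟧) := by
    have := (condIndepFun_iff (m' := MeasurableSpace.comap X inferInstance) (hm' := hm) T C hT hC μ).mp hci A B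
      ⟨Set.Ioi t, measurableSet_Ioi, rfl⟩ ⟨Set.Ioi t, measurableSet_Ioi, rfl⟩
    exact this
  -- the conditional expectation versions
  set g : Ω → ℝ := μ[(Set.indicator B fun _ => (1 : ℝ)) | MeasurableSpace.comap X inferInstance] with hg_def
  set s : Ω → ℝ := μ[(Set.indicator A fun _ => (1 : ℝ)) | MeasurableSpace.comap X inferInstance] with hs_def
  have hgG : g =ᵐ[μ] fun ω => G t (X ω) := hG t
  have hsST : s =ᵐ[μ] fun ω => ST t (X ω) := hST t
  have hgpos : ∀ᵐ ω ∂μ, δ < g ω := by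
    filter_upwards [hgG] with ω hω
    rw [hω]; exact hGpos t ht (X ω)
  -- X measurable w.r.t. m, h ∘ X is m-measurable
  have hXm : Measurable[MeasurableSpace.comap X inferInstance] X := fun sset hs => ⟨sset, hs, rfl⟩
  have hhXm : StronglyMeasurable[MeasurableSpace.comap X inferInstance] fun ω => h (X ω) := (hh.comp hXm).stronglyMeasurable
  have hgm : StronglyMeasurable[MeasurableSpace.comap X inferInstance] g := stronglyMeasurable_condExp
  set f : Ω → ℝ := fun ω => h (X ω) / g ω with hf_def
  have hfm : StronglyMeasurable[MeasurableSpace.comap X inferInstance] f :=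
    (hhXm.measurable.div hgm.measurable).stronglyMeasurable
  have hfmeas : AEStronglyMeasurable f μ := (hfm.mono hm).aestronglyMeasurable
  have hfbound : ∀ᵐ ω ∂μ, ‖f ω‖ ≤ Cb / δ := by
    filter_upwards [hgpos] with ω hω
    have hg0 : 0 < g ω := hδ.trans hω
    rw [hf_def]
    simp only [norm_div, Real.norm_eq_abs, abs_of_pos hg0]
    have h1 : |h (X ω)| ≤ Cb := hhb (X ω)
    have h2 : 0 ≤ |h (X ω)| := abs_nonneg _
    calc |h (X ω)| / g ω ≤ |h (X ω)| / δ := by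
          apply div_le_div_of_nonneg_left h2 hδ (le_of_lt hω)
      _ ≤ Cb / δ := by apply div_le_div_of_nonneg_right h1 hδ.le
  set ind : Ω → ℝ := Set.indicator (A ∩ B) fun _ => (1 : ℝ) with hind_def
  have hind_meas : Measurable ind :=
    (measurable_const.indicator (hAmeas.inter hBmeas))
  have hind_int : Integrable ind μ := by
    refine Integrable.mono' (integrable_const 1) hind_meas.aestronglyMeasurable ?_
    filter_upwards with ω
    rw [hind_def]
    by_cases hω : ω ∈ A ∩ B <;> simp [Set.indicator_apply, hω]
  have hfind_int : Integrable (f * ind) μ := by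
    refine Integrable.mono' (integrable_const (Cb / δ)) ?_ ?_
    · exact hfmeas.mul hind_meas.aestronglyMeasurable
    · filter_upwards [hfbound, hgpos] with ω hb hg0
      have hfnn : 0 ≤ Cb / δ := le_trans (norm_nonneg _) hb
      rw [Pi.mul_apply, norm_mul]
      have : ‖ind ω‖ ≤ 1 := by
        rw [hind_def]
        by_cases hω : ω ∈ A ∩ B <;> simp [Set.indicator_apply, hω]
      calc ‖f ω‖ * ‖ind ω‖ ≤ (Cb / δ) * 1 :=
            mul_le_mul hb this (norm_nonneg _) hfnn
        _ = Cb / δ := mul_one _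
  -- Step 1: the LHS integrand equals f * ind a.e.
  have e1 : (fun ω => if t < min (T ω) (C ω) then h (X ω) / G t (X ω) else 0)
      =ᵐ[μ] f * ind := by
    filter_upwards [hgG] with ω hω
    have hiff : t < min (T ω) (C ω) ↔ ω ∈ A ∩ B := by
      simp [hA_def, hB_def, lt_min_iff, Set.mem_setOf_eq]
    by_cases hc : t < min (T ω) (C ω)
    · have hmem : ω ∈ A ∩ B := hiff.mp hc
      simp only [Pi.mul_apply, hind_def, Set.indicator_of_mem hmem, mul_one, hf_def,
        if_pos hc, hω]
    · have hmem : ω ∉ A ∩ B := fun hx => hc (hiff.mpr hx)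
      simp only [if_neg hc, Pi.mul_apply, hind_def, Set.indicator_of_notMem hmem, mul_zero]
  -- Step 2: pull-out property
  have e2 : μ[f * ind | MeasurableSpace.comap X inferInstance] =ᵐ[μ] f * μ[ind | MeasurableSpace.comap X inferInstance] :=
    condExp_mul_of_stronglyMeasurable_left hfm hfind_int hind_int
  -- Step 3: chain of a.e. equalities for the conditional expectation
  have e3 : f * μ[ind | MeasurableSpace.comap X inferInstance] =ᵐ[μ] fun ω => h (X ω) * ST t (X ω) := by
    have hkey : μ[ind | MeasurableSpace.comap X inferInstance] =ᵐ[μ] s * g := key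
    filter_upwards [hkey, hgpos, hsST] with ω h1 h2 h3
    rw [Pi.mul_apply, h1, Pi.mul_apply, hf_def]
    have hg0 : g ω ≠ 0 := ne_of_gt (hδ.trans h2)
    field_simp
    rw [h3]
  calc ∫ ω, (if t < min (T ω) (C ω) then h (X ω) / G t (X ω) else 0) ∂μ
      = ∫ ω, (f * ind) ω ∂μ := integral_congr_ae e1
    _ = ∫ ω, (μ[f * ind | MeasurableSpace.comap X inferInstance]) ω ∂μ := (integral_condExp (μ := μ) (f := f * ind) hm).symm
    _ = ∫ ω, h (X ω) * ST t (X ω) ∂μ := integral_congr_ae (e2.trans e3)
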